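/- The operators dρ^X = 2πiℏu·I, dρ^B = -πiℏu²·I, dρ^Y = -d/du, dρ^R = ½I + u·d/du, dρ^S = 2πiℏ·I acting on smooth functions of u ∈ R satisfy the commutation relations [dρ^X, dρ^Y] = dρ^S, [dρ^X, dρ^R] = -dρ^X, [dρ^Y, dρ^R] = dρ^Y, [dρ^Y, dρ^B] = dρ^X, [dρ^R, dρ^B] = 2dρ^B, with all other commutators of basis operators vanishing. -/

import Mathlib

open Real Complex

/-- dρ^X = 2πiℏu·I. -/
noncomputable def dX (h : ℝ) (f : ℝ → ℂ) : ℝ → ℂ :=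
  fun u => 2 * (π : ℂ) * Complex.I * (h : ℂ) * (u : ℂ) * f u

/-- dρ^B = -πiℏu²·I. -/
noncomputable def dB (h : ℝ) (f : ℝ → ℂ) : ℝ → ℂ :=
  fun u => -((π : ℂ) * Complex.I * (h : ℂ) * (u : ℂ) ^ 2) * f u

/-- dρ^Y = -d/du. -/
noncomputable def dY (f : ℝ → ℂ) : ℝ → ℂ := fun u => -deriv f u

/-- dρ^R = ½I + u d/du. -/
noncomputable def dR (f : ℝ → ℂ) : ℝ → ℂ := fun u => (1 / 2) * f u + (u : ℂ) * deriv f u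

/-- dρ^S = 2πiℏ·I. -/
noncomputable def dS (h : ℝ) (f : ℝ → ℂ) : ℝ → ℂ :=
  fun u => 2 * (π : ℂ) * Complex.I * (h : ℂ) * f u


section aux

lemma aux_mul (g : ℝ → ℂ) (hg : Differentiable ℝ g) (u : ℝ) : deriv (fun x : ℝ => (x : ℂ) * g x) u = g u + u * deriv g u := by
  have hU : HasDerivAt (fun x : ℝ => (x : ℂ)) 1 u := (hasDerivAt_id u).ofReal_comp
  have : HasDerivAt (fun x : ℝ => (x : ℂ) * g x) (1 * g u + (u : ℂ) * deriv g u) u := hU.mul (hg u).hasDerivAt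
  simpa using this.deriv

lemma aux_sq (g : ℝ → ℂ) (hg : Differentiable ℝ g) (u : ℝ) : deriv (fun x : ℝ => (x : ℂ) ^ 2 * g x) u
    = 2 * u * g u + u ^ 2 * deriv g u := by
  have hU : HasDerivAt (fun x : ℝ => (x : ℂ)) 1 u := (hasDerivAt_id u).ofReal_comp
  have hU2 : HasDerivAt (fun x : ℝ => (x : ℂ) ^ 2) (2 * u) u := by
    have : HasDerivAt (fun y : ℝ => (y : ℂ) * y) (1 * (u : ℂ) + (u : ℂ) * 1) u := hU.mul hU
    simp only [one_mul, mul_one] at this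
    have h2 : (fun x : ℝ => (x : ℂ) ^ 2) = fun y : ℝ => (y : ℂ) * y := by
      funext x; ring
    rw [h2]; convert this using 1; ring
  have : HasDerivAt (fun x : ℝ => (x : ℂ) ^ 2 * g x) (2 * (u : ℂ) * g u + (u : ℂ) ^ 2 * deriv g u) u := hU2.mul (hg u).hasDerivAt
  simpa [mul_comm, mul_assoc] using this.deriv

end aux


/-- The derived Schrödinger type representation operators satisfy the commutation
relations of the SSR Lie algebra on smooth functions, all other commutators of
basis operators vanishing. -/
theorem derived_representation_commutators (h : ℝ) (f : ℝ → ℂ) (hf : ContDiff ℝ (⊤ : ℕ∞) f) :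
    (dX h (dY f) - dY (dX h f) = dS h f) ∧
    (dX h (dR f) - dR (dX h f) = -dX h f) ∧
    (dY (dR f) - dR (dY f) = dY f) ∧
    (dY (dB h f) - dB h (dY f) = dX h f) ∧
    (dR (dB h f) - dB h (dR f) = 2 • dB h f) ∧
    (dS h (dX h f) - dX h (dS h f) = 0) ∧
    (dS h (dY f) - dY (dS h f) = 0) ∧
    (dS h (dB h f) - dB h (dS h f) = 0) ∧
    (dS h (dR f) - dR (dS h f) = 0) ∧
    (dX h (dB h f) - dB h (dX h f) = 0) := by
  have hdf : Differentiable ℝ f := hf.differentiable (by simp)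
  have hdf' : Differentiable ℝ (deriv f) :=
    ((contDiff_infty_iff_deriv.mp (hf.of_le (by simp))).2).differentiable (by simp)
  have hx : Differentiable ℝ (fun x : ℝ => (x : ℂ)) := Complex.ofRealCLM.differentiable
  set c : ℂ := 2 * (π : ℂ) * Complex.I * (h : ℂ) with hc
  -- rewrite operators in terms of c
  have dXf : ∀ u : ℝ, deriv (dX h f) u = c * f u + c * u * deriv f u := by
    intro u
    have : dX h f = fun x : ℝ => c * ((x : ℂ) * f x) := by
      funext x; simp [dX, hc]; ring
    rw [this, deriv_const_mul _ (show DifferentiableAt ℝ (fun x : ℝ => (x : ℂ) * f x) u from (hx.mul hdf) u), aux_mul f hdf u]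
    ring
  have dBf : ∀ u : ℝ, deriv (dB h f) u
      = -(c/2) * (2 * u * f u + u ^ 2 * deriv f u) := by
    intro u
    have : dB h f = fun x : ℝ => -(c/2) * ((x : ℂ) ^ 2 * f x) := by
      funext x; simp [dB, hc]; ring
    rw [this, deriv_const_mul _ (show DifferentiableAt ℝ (fun x : ℝ => (x : ℂ) ^ 2 * f x) u from ((hx.pow 2).mul hdf) u), aux_sq f hdf u]
  have dRf : ∀ u : ℝ, deriv (dR f) u
      = (3/2) * deriv f u + u * deriv (deriv f) u := by
    intro u
    have : dR f = fun x : ℝ => (1/2 : ℂ) * f x + (x : ℂ) * deriv f x := rfl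
    rw [this]
    rw [deriv_fun_add ((hdf u).const_mul _) (show DifferentiableAt ℝ (fun x : ℝ => (x : ℂ) * deriv f x) u from (hx.mul hdf') u),
      deriv_const_mul _ (hdf u), aux_mul (deriv f) hdf' u]
    ring
  have dYf : ∀ u : ℝ, deriv (dY f) u = -deriv (deriv f) u := by
    intro u
    have : dY f = fun x : ℝ => -deriv f x := rfl
    rw [this]; exact deriv.neg
  have dSf : ∀ u : ℝ, deriv (dS h f) u = c * deriv f u := by
    intro u
    exact deriv_const_mul _ (hdf u)
  refine ⟨?_, ?_, ?_, ?_, ?_, ?_, ?_, ?_, ?_, ?_⟩ <;> funext u <;>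
    simp only [dX, dY, dR, dB, dS, Pi.sub_apply, Pi.neg_apply, Pi.smul_apply, Pi.zero_apply,
      smul_eq_mul, dXf, dBf, dRf, dYf, dSf, ← hc] <;> push_cast <;> ring
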